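/- Let n ≥ 1 and let A, B ⊆ {0,1}^n be nonempty. Then the average Hamming distance (1/(|A|·|B|)) Σ_{a∈A, b∈B} d(a,b) satisfies n·( h⁻¹(log|A|/n) * h⁻¹(log|B|/n) ) ≤ (1/(|A|·|B|)) Σ_{a∈A, b∈B} d(a,b) ≤ n·( 1 − h⁻¹(log|A|/n) * h⁻¹(log|B|/n) ). -/

import Mathlib

open Finset Asymptotics Filter

/-- Binary entropy function (base-2 logarithms). -/
noncomputable def binEnt (p : ℝ) : ℝ :=
  -(p * Real.logb 2 p) - (1 - p) * Real.logb 2 (1 - p)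

/-- Inverse of the binary entropy function restricted to `[0, 1/2]`. -/
noncomputable def binEntInv (x : ℝ) : ℝ :=
  sSup {p : ℝ | p ∈ Set.Icc (0:ℝ) (1/2) ∧ binEnt p ≤ x}

/-- `p*q = p(1-q) + q(1-p)`. -/
def pstar (p q : ℝ) : ℝ := p * (1 - q) + q * (1 - p)

/-- Probability of the rectangle `A × B` for `ρ`-correlated uniform binary strings. -/
noncomputable def Pxy (n : ℕ) (ρ : ℝ) (A B : Finset (Fin n → Bool)) : ℝ :=
  ∑ a ∈ A, ∑ b ∈ B,
    (2:ℝ)⁻¹ ^ n * ((1 + ρ)/2) ^ n * ((1 - ρ)/(1 + ρ)) ^ (hammingDist a b)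

/-- Hamming sphere of radius `j` around the all-zeros string in `{0,1}^n`. -/
def hSphere (n j : ℕ) : Finset (Fin n → Bool) :=
  Finset.univ.filter (fun x => (Finset.univ.filter (fun i => x i = true)).card = j)

/-- The exponent function `w_d(α,β)`. -/
noncomputable def wd (α β d : ℝ) : ℝ :=
  α + binEntInv α * binEnt (1/2 + (binEntInv β - d)/(2 * binEntInv α))
    + (1 - binEntInv α) * binEnt (1/2 + (d - (1 - binEntInv β))/(2 * (1 - binEntInv α)))

/-- The noise operator `T_ρ`. -/
noncomputable def Tnoise (n : ℕ) (ρ : ℝ) (f : (Fin n → Bool) → ℝ) (y : Fin n → Bool) : ℝ :=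
  ∑ x : Fin n → Bool,
    f x * ((1 + ρ)/2) ^ (n - hammingDist x y) * ((1 - ρ)/2) ^ (hammingDist x y)

/-- The normalized `p`-norm on functions on the hypercube. -/
noncomputable def pNorm (n : ℕ) (p : ℝ) (f : (Fin n → Bool) → ℝ) : ℝ :=
  ((2:ℝ)⁻¹ ^ n * ∑ x : Fin n → Bool, |f x| ^ p) ^ (1/p)

/-- Indicator function of a set `A ⊆ {0,1}^n`. -/
def indA (n : ℕ) (A : Finset (Fin n → Bool)) : (Fin n → Bool) → ℝ :=
  fun x => if x ∈ A then 1 else 0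

/-!
Let `p i` and `q i` be the fractions of strings in `A` and `B` whose `i`-th bit is `1`. Counting
disagreements coordinatewise, the average distance is `∑ i, pstar (p i) (q i)`, which
equals `n / 2 - 2 ∑ i, (1/2 - p i) * (1/2 - q i)`; by Cauchy–Schwarz it suffices to show
`∑ i, (1/2 - p i) ^ 2 ≤ n * (1/2 - h⁻¹(log |A| / n)) ^ 2`. Subadditivity of entropy gives
`log |A| ≤ ∑ i, h (p i)`, and since `x ↦ h (1/2 - √x)` is concave on `[0, 1/4]`, Jensen's
inequality bounds the right-hand side by `n * h (1/2 - √m)`, where `m` is the mean of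
`(1/2 - p i) ^ 2`. Monotonicity of `h` on `[0, 1/2]` then turns this into `√m ≤ 1/2 - h⁻¹(log |A| / n)`.
-/

open Real

section Hypercube

variable {ι : Type*}

noncomputable def bitFreq (A : Finset (ι → Bool)) (i : ι) (b : Bool) : ℝ :=
  #{a ∈ A | a i = b} / #A

variable {A : Finset (ι → Bool)}

theorem sum_comp_apply_eq_card_mul (A : Finset (ι → Bool)) (i : ι) (g : Bool → ℝ) :
    ∑ a ∈ A, g (a i) = #A * ∑ b, bitFreq A i b * g b := by
  rcases A.eq_empty_or_nonempty with rfl | hA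
  · simp
  have hA : (#A : ℝ) ≠ 0 := by exact_mod_cast hA.card_ne_zero
  rw [← sum_fiberwise' A (· i) g, mul_sum]
  refine sum_congr rfl fun b _ => ?_
  rw [sum_const, nsmul_eq_mul, bitFreq, ← mul_assoc, mul_div_cancel₀ _ hA]

theorem sum_bitFreq (hA : A.Nonempty) (i : ι) : ∑ b, bitFreq A i b = 1 := by
  have h := sum_comp_apply_eq_card_mul A i fun _ => 1
  simp only [sum_const, nsmul_eq_mul, mul_one] at h
  exact (mul_eq_left₀ (by exact_mod_cast hA.card_ne_zero)).1 h.symm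

theorem bitFreq_false (hA : A.Nonempty) (i : ι) : bitFreq A i false = 1 - bitFreq A i true := by
  linarith [sum_bitFreq hA i, Fintype.sum_bool (bitFreq A i)]

theorem bitFreq_pos {a : ι → Bool} (ha : a ∈ A) (i : ι) : 0 < bitFreq A i (a i) :=
  div_pos (by exact_mod_cast card_pos.2 ⟨a, by simp [ha]⟩)
    (by exact_mod_cast card_pos.2 ⟨a, ha⟩)

theorem bitFreq_mem_Icc (A : Finset (ι → Bool)) (i : ι) (b : Bool) :
    bitFreq A i b ∈ Set.Icc 0 1 :=
  ⟨by unfold bitFreq; positivity,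
    div_le_one_of_le₀ (by exact_mod_cast card_filter_le _ _) (by positivity)⟩

theorem sum_sum_hammingDist [Fintype ι] (hA : A.Nonempty) {B : Finset (ι → Bool)}
    (hB : B.Nonempty) :
    ∑ a ∈ A, ∑ b ∈ B, (hammingDist a b : ℝ)
      = #A * #B * ∑ i, pstar (bitFreq A i true) (bitFreq B i true) := by
  have hdist (a b : ι → Bool) :
      (hammingDist a b : ℝ) = ∑ i, if a i ≠ b i then 1 else 0 := by
    rw [hammingDist, natCast_card_filter]
  have hrow (i : ι) (α : Bool) :
      ∑ b ∈ B, (if α ≠ b i then 1 else 0 : ℝ) = #B * bitFreq B i !α := by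
    rw [sum_comp_apply_eq_card_mul B i fun β => if α ≠ β then 1 else 0]
    cases α <;> simp
  simp_rw [hdist]
  rw [sum_congr rfl fun a _ => sum_comm, sum_comm, mul_sum]
  refine sum_congr rfl fun i _ => ?_
  rw [sum_congr rfl fun a _ => hrow i (a i),
    sum_comp_apply_eq_card_mul A i fun α => #B * bitFreq B i !α]
  simp only [Fintype.sum_bool, Bool.not_true, Bool.not_false, bitFreq_false hA, bitFreq_false hB,
    pstar]
  ring

theorem sum_negMulLog_bitFreq (hA : A.Nonempty) (i : ι) :
    ∑ b, negMulLog (bitFreq A i b) = binEntropy (bitFreq A i true) := by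
  rw [Fintype.sum_bool, bitFreq_false hA, binEntropy_eq_negMulLog_add_negMulLog_one_sub]

theorem log_card_le_sum_binEntropy_bitFreq [Fintype ι] (hA : A.Nonempty) :
    log #A ≤ ∑ i, binEntropy (bitFreq A i true) := by
  classical
  set μ : (ι → Bool) → ℝ := fun x => ∏ i, bitFreq A i (x i)
  have hμ_pos (a) (ha : a ∈ A) : 0 < μ a := prod_pos fun i _ => bitFreq_pos ha i
  have hμ_sum : ∑ a ∈ A, μ a ≤ 1 := calc
    ∑ a ∈ A, μ a ≤ ∑ x, μ x :=
      sum_le_univ_sum_of_nonneg fun x => prod_nonneg fun i _ => (bitFreq_mem_Icc A i _).1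
    _ = ∏ i, ∑ b, bitFreq A i b := (Fintype.prod_sum _).symm
    _ = 1 := by simp only [sum_bitFreq hA, prod_const_one]
  have hcross : ∑ a ∈ A, log (μ a) = -#A * ∑ i, binEntropy (bitFreq A i true) := calc
    ∑ a ∈ A, log (μ a) = ∑ i, ∑ a ∈ A, log (bitFreq A i (a i)) := by
      rw [← sum_comm]
      exact sum_congr rfl fun a ha => log_prod fun i _ => (bitFreq_pos ha i).ne'
    _ = ∑ i, #A * ∑ b, bitFreq A i b * log (bitFreq A i b) :=
      sum_congr rfl fun i _ => sum_comp_apply_eq_card_mul A i fun b => log (bitFreq A i b)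
    _ = -#A * ∑ i, binEntropy (bitFreq A i true) := by
      simp only [← sum_negMulLog_bitFreq hA, negMulLog, neg_mul, sum_neg_distrib, mul_sum,
        mul_neg, neg_neg]
  have hcard : (0 : ℝ) < #A := by exact_mod_cast hA.card_pos
  -- Gibbs' inequality for the uniform distribution on `A` against the product of its marginals
  have hgibbs : ∑ a ∈ A, log (#A * μ a) ≤ ∑ a ∈ A, (#A * μ a - 1) :=
    sum_le_sum fun a ha => log_le_sub_one_of_pos (mul_pos hcard (hμ_pos a ha))
  rw [sum_congr rfl fun a ha => log_mul hcard.ne' (hμ_pos a ha).ne', sum_add_distrib, hcross,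
    sum_sub_distrib, ← mul_sum] at hgibbs
  simp only [sum_const, nsmul_eq_mul] at hgibbs
  nlinarith

end Hypercube

theorem binEnt_eq_binEntropy_div (p : ℝ) : binEnt p = binEntropy p / log 2 := by
  rw [binEnt, binEntropy, logb, logb, log_inv, log_inv]
  ring

theorem binEnt_strictMonoOn : StrictMonoOn binEnt (Set.Icc 0 (1/2)) := by
  rw [funext binEnt_eq_binEntropy_div, one_div]
  exact (strictMono_id.div_const (log_pos one_lt_two)).comp_strictMonoOn binEntropy_strictMonoOn

theorem binEntInv_le_half (x : ℝ) : binEntInv x ≤ 1/2 :=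
  Real.sSup_le (fun _ hp => hp.1.2) (by norm_num)

theorem binEntInv_le {x q : ℝ} (hq : q ∈ Set.Icc (0 : ℝ) (1/2)) (hx : x ≤ binEnt q) :
    binEntInv x ≤ q :=
  Real.sSup_le (fun _ hp => not_lt.1 fun hqp => (binEnt_strictMonoOn hq hp.1 hqp).not_ge
    (hp.2.trans hx)) hq.1

theorem convexOn_log_half_add_sub_log_half_sub :
    ConvexOn ℝ (Set.Ico 0 (1/2)) fun t => log (1/2 + t) - log (1/2 - t) := by
  have hderiv {t : ℝ} (ht : t ∈ Set.Ioo (0 : ℝ) (1/2)) :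
      HasDerivAt (fun t => log (1/2 + t) - log (1/2 - t)) (1 / ((1/2 + t) * (1/2 - t))) t := by
    have hpos : 0 < 1/2 + t := by linarith [ht.1]
    have hneg : 0 < 1/2 - t := by linarith [ht.2]
    refine ((((hasDerivAt_id' t).const_add (1/2)).log hpos.ne').sub
      (((hasDerivAt_id' t).const_sub (1/2)).log hneg.ne')).congr_deriv ?_
    rw [div_sub_div _ _ hpos.ne' hneg.ne']
    congr 1
    ring
  refine MonotoneOn.convexOn_of_deriv (convex_Ico _ _) ?_ ?_ ?_
  · refine ContinuousOn.sub (continuousOn_log.comp (by fun_prop) ?_)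
      (continuousOn_log.comp (by fun_prop) ?_) <;>
    · intro t ht
      simp only [Set.mem_compl_iff, Set.mem_singleton_iff]
      linarith [ht.1, ht.2]
  · rw [interior_Ico]
    exact fun t ht => (hderiv ht).differentiableAt.differentiableWithinAt
  · rw [interior_Ico]
    intro s hs t ht hst
    rw [(hderiv hs).deriv, (hderiv ht).deriv]
    apply one_div_le_one_div_of_le (by nlinarith [ht.1, ht.2])
    nlinarith [hs.1]

theorem concaveOn_binEntropy_half_sub_sqrt :
    ConcaveOn ℝ (Set.Icc 0 (1/4)) fun x => binEntropy (1/2 - √x) := by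
  set L : ℝ → ℝ := fun t => log (1/2 + t) - log (1/2 - t) with hL
  have hsqrt {x : ℝ} (hx : x ∈ Set.Ioo (0 : ℝ) (1/4)) : √x ∈ Set.Ioo (0 : ℝ) (1/2) :=
    ⟨sqrt_pos.2 hx.1, (sqrt_lt' (by norm_num)).2 (by linarith [hx.2])⟩
  -- the derivative is minus half the slope of the convex function `L` between `0` and `√x`
  have hderiv {x : ℝ} (hx : x ∈ Set.Ioo (0 : ℝ) (1/4)) :
      HasDerivAt (fun x => binEntropy (1/2 - √x)) (-((L √x - L 0) / (√x - 0)) / 2) x := by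
    obtain ⟨hs₀, hs₁⟩ := hsqrt hx
    refine ((hasDerivAt_binEntropy (p := 1/2 - √x) (by linarith) (by linarith)).comp x
      ((hasDerivAt_sqrt hx.1.ne').const_sub (1/2))).congr_deriv ?_
    rw [hL]
    simp only [add_zero, sub_zero, sub_self]
    rw [show 1 - (1/2 - √x) = 1/2 + √x by ring]
    field_simp
  refine AntitoneOn.concaveOn_of_deriv (convex_Icc _ _) (by fun_prop) ?_ ?_
  · rw [interior_Icc]
    exact fun x hx => (hderiv hx).differentiableAt.differentiableWithinAt
  · rw [interior_Icc]
    intro x hx y hy hxy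
    rw [(hderiv hx).deriv, (hderiv hy).deriv]
    have hslope : (L √x - L 0) / (√x - 0) ≤ (L √y - L 0) / (√y - 0) :=
      convexOn_log_half_add_sub_log_half_sub.secant_mono ⟨le_rfl, by norm_num⟩
        (Set.Ioo_subset_Ico_self (hsqrt hx)) (Set.Ioo_subset_Ico_self (hsqrt hy))
        (hsqrt hx).1.ne' (hsqrt hy).1.ne' (sqrt_le_sqrt hxy)
    linarith

section Bias

variable {ι : Type*} [Fintype ι] [Nonempty ι]

theorem sum_binEntropy_le {p : ι → ℝ} (hp : ∀ i, p i ∈ Set.Icc 0 1) :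
    ∑ i, binEntropy (p i)
      ≤ Fintype.card ι * binEntropy (1/2 - √((∑ i, (1/2 - p i) ^ 2) / Fintype.card ι)) := by
  have hcard : (0 : ℝ) < Fintype.card ι := by exact_mod_cast Fintype.card_pos
  have hbias (i : ι) : binEntropy (1/2 - √((1/2 - p i) ^ 2)) = binEntropy (p i) := by
    rw [sqrt_sq_eq_abs]
    rcases abs_cases (1/2 - p i) with ⟨h, _⟩ | ⟨h, _⟩ <;> rw [h]
    · ring_nf
    · rw [← binEntropy_one_sub]; ring_nf
  have hjensen := concaveOn_binEntropy_half_sub_sqrt.le_map_sum (t := univ)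
    (w := fun _ => (Fintype.card ι : ℝ)⁻¹) (p := fun i => (1/2 - p i) ^ 2)
    (fun _ _ => by positivity) (by simp [hcard.ne'])
    (fun i _ => ⟨sq_nonneg _, by nlinarith [(hp i).1, (hp i).2]⟩)
  simp only [smul_eq_mul, ← mul_sum, hbias] at hjensen
  simp only [inv_mul_eq_div] at hjensen
  rwa [div_le_iff₀' hcard] at hjensen

theorem sum_sq_half_sub_le_of_le_sum_binEnt {p : ι → ℝ} (hp : ∀ i, p i ∈ Set.Icc 0 1)
    {α : ℝ} (hα : Fintype.card ι * α ≤ ∑ i, binEnt (p i)) :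
    ∑ i, (1/2 - p i) ^ 2 ≤ Fintype.card ι * (1/2 - binEntInv α) ^ 2 := by
  have hcard : (0 : ℝ) < Fintype.card ι := by exact_mod_cast Fintype.card_pos
  have hjensen := sum_binEntropy_le hp
  set m : ℝ := (∑ i, (1/2 - p i) ^ 2) / Fintype.card ι with hm
  have hm₀ : 0 ≤ m := by positivity
  have hm₁ : m ≤ 1/4 := by
    rw [hm, div_le_iff₀ hcard]
    calc ∑ i, (1/2 - p i) ^ 2 ≤ ∑ _i : ι, (1/4 : ℝ) :=
          sum_le_sum fun i _ => by nlinarith [(hp i).1, (hp i).2]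
      _ = 1/4 * Fintype.card ι := by rw [sum_const, card_univ, nsmul_eq_mul, mul_comm]
  have hsqrt : √m ≤ 1/2 := sqrt_le_iff.2 ⟨by norm_num, by linarith⟩
  have hα' : α ≤ binEnt (1/2 - √m) := by
    simp only [binEnt_eq_binEntropy_div, ← sum_div] at hα ⊢
    rw [le_div_iff₀ (log_pos one_lt_two)] at hα ⊢
    nlinarith
  have hφ : binEntInv α ≤ 1/2 - √m :=
    binEntInv_le ⟨by linarith, by linarith [sqrt_nonneg m]⟩ hα'
  calc ∑ i, (1/2 - p i) ^ 2 = Fintype.card ι * √m ^ 2 := by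
        rw [sq_sqrt hm₀, hm, mul_div_cancel₀ _ hcard.ne']
    _ ≤ Fintype.card ι * (1/2 - binEntInv α) ^ 2 := by
        gcongr
        linarith

variable {A : Finset (ι → Bool)}

theorem sum_sq_half_sub_bitFreq_le (hA : A.Nonempty) :
    ∑ i, (1/2 - bitFreq A i true) ^ 2
      ≤ Fintype.card ι * (1/2 - binEntInv (logb 2 #A / Fintype.card ι)) ^ 2 := by
  have hcard : (Fintype.card ι : ℝ) ≠ 0 := by exact_mod_cast Fintype.card_ne_zero
  refine sum_sq_half_sub_le_of_le_sum_binEnt (fun i => bitFreq_mem_Icc A i true) ?_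
  rw [mul_div_cancel₀ _ hcard, logb]
  simp only [binEnt_eq_binEntropy_div, ← sum_div]
  exact div_le_div_of_nonneg_right (log_card_le_sum_binEntropy_bitFreq hA) (log_pos one_lt_two).le

end Bias

theorem abs_sum_mul_le_of_sum_sq_le {ι : Type*} (s : Finset ι) {f g : ι → ℝ} {a b c : ℝ}
    (ha : 0 ≤ a) (hb : 0 ≤ b) (hc : 0 ≤ c) (hf : ∑ i ∈ s, f i ^ 2 ≤ c * a ^ 2)
    (hg : ∑ i ∈ s, g i ^ 2 ≤ c * b ^ 2) :
    |∑ i ∈ s, f i * g i| ≤ c * (a * b) := by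
  refine abs_le_of_sq_le_sq ?_ (by positivity)
  calc (∑ i ∈ s, f i * g i) ^ 2 ≤ (∑ i ∈ s, f i ^ 2) * ∑ i ∈ s, g i ^ 2 :=
        sum_mul_sq_le_sq_mul_sq s f g
    _ ≤ (c * a ^ 2) * (c * b ^ 2) :=
        mul_le_mul hf hg (sum_nonneg fun i _ => sq_nonneg _) (by positivity)
    _ = (c * (a * b)) ^ 2 := by ring

theorem pstar_eq_half_sub (p q : ℝ) : pstar p q = 1/2 - 2 * ((1/2 - p) * (1/2 - q)) := by
  rw [pstar]
  ring

/-- Corollary 1 (bounds on the average Hamming distance between two sets). -/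
theorem stmt_16 (n : ℕ) (hn : 1 ≤ n) (A B : Finset (Fin n → Bool))
    (hA : A.Nonempty) (hB : B.Nonempty) :
    (n:ℝ) * pstar (binEntInv (Real.logb 2 A.card / n)) (binEntInv (Real.logb 2 B.card / n))
      ≤ (1 / ((A.card : ℝ) * B.card)) * ∑ a ∈ A, ∑ b ∈ B, (hammingDist a b : ℝ) ∧
    (1 / ((A.card : ℝ) * B.card)) * ∑ a ∈ A, ∑ b ∈ B, (hammingDist a b : ℝ)
      ≤ (n:ℝ) * (1 - pstar (binEntInv (Real.logb 2 A.card / n))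
                           (binEntInv (Real.logb 2 B.card / n))) := by
  have : Nonempty (Fin n) := ⟨⟨0, hn⟩⟩
  have hbiasA := sum_sq_half_sub_bitFreq_le hA
  have hbiasB := sum_sq_half_sub_bitFreq_le hB
  rw [Fintype.card_fin] at hbiasA hbiasB
  have hcorr := abs_sum_mul_le_of_sum_sq_le univ (sub_nonneg.2 (binEntInv_le_half _))
    (sub_nonneg.2 (binEntInv_le_half _)) n.cast_nonneg hbiasA hbiasB
  have hcardA : (#A : ℝ) ≠ 0 := by exact_mod_cast hA.card_ne_zero
  have hcardB : (#B : ℝ) ≠ 0 := by exact_mod_cast hB.card_ne_zero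
  rw [sum_sum_hammingDist hA hB, ← mul_assoc,
    one_div_mul_cancel (mul_ne_zero hcardA hcardB), one_mul]
  simp only [pstar_eq_half_sub, sum_sub_distrib, ← mul_sum, sum_const, card_univ,
    Fintype.card_fin, nsmul_eq_mul]
  constructor <;> linarith [abs_le.1 hcorr]
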